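/- In the choice-gadget graph built from finite nonempty sets of integers X₁, …, X_k, an integer W greater than every element of every X_i, and a real β with 0 < β < 1, every edge is a feasible transition; consequently, every directed s–t path of the choice-gadget graph is feasible. -/

import Mathlib

/-!
Common definitions for time-inconsistent planning models (Kleinberg–Oren).
A task graph is given by a finite vertex type `V`, an edge relation
`E : V → V → Prop` and edge weights `w : V → V → ℝ`.  A directed path is
represented by the list of its vertices (nonempty, consecutive vertices joined
by edges, no repeated vertices).
-/

variable {V : Type*}

/-- The (real) cost of a path: the sum of the weights of its edges. -/
def pathCost (w : V → V → ℝ) (p : List V) : ℝ :=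
  ((p.zip p.tail).map fun e => w e.1 e.2).sum

/-- `p` is a directed path from `a` to `b` in the graph with edge relation `E`. -/
def IsPathOn (E : V → V → Prop) (a b : V) (p : List V) : Prop :=
  p.head? = some a ∧ p.getLast? = some b ∧ p.Chain' E ∧ p.Nodup

/-- The perceived cost of a path with present bias `β`:
the weight of the first edge plus `β` times the total weight of the rest. -/
def perceived (w : V → V → ℝ) (β : ℝ) (p : List V) : ℝ :=
  match p.zip p.tail with
  | [] => 0
  | e :: es => w e.1 e.2 + β * ((es.map fun e' => w e'.1 e'.2).sum)

/-- The edge `a → b` is a feasible transition (towards target `t`): it is the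
first edge of some `a`–`t` path whose perceived cost is minimum among all
`a`–`t` paths. -/
def FeasibleStep (E : V → V → Prop) (w : V → V → ℝ) (β : ℝ) (t : V) (a b : V) : Prop :=
  E a b ∧ ∃ q : List V, IsPathOn E a t (a :: b :: q) ∧
    ∀ r : List V, IsPathOn E a t r → perceived w β (a :: b :: q) ≤ perceived w β r

/-- A feasible `s`–`t` path: every edge on it is a feasible transition from its tail. -/
def FeasPath (E : V → V → Prop) (w : V → V → ℝ) (β : ℝ) (s t : V) (p : List V) : Prop :=
  IsPathOn E s t p ∧ p.Chain' (FeasibleStep E w β t)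

/-- The directed graph is acyclic: no directed cycle. -/
def NoDirCycle (E : V → V → Prop) : Prop := ∀ v, ¬ Relation.TransGen E v v

/-- Vertices of the choice-gadget graph built from the finite sets
`X 0, …, X (k-1)` of integers: `v i` for `i ∈ {0,…,k}` and, for each gadget
`i ∈ {1,…,k}` (indexed by `Fin k`, gadget `i` ↔ index `i-1`) and each
`x ∈ X (i-1)`, a middle vertex `u (i-1) x`. -/
inductive CV (k : ℕ) (X : Fin k → Finset ℤ) : Type
  | v (i : Fin (k + 1))
  | u (i : Fin k) (x : {z : ℤ // z ∈ X i})

/-- Edges of the choice-gadget graph: `v_{i-1} → u_{i,x}` and `u_{i,x} → v_i`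
for every `x ∈ X_i`. -/
def CE (k : ℕ) (X : Fin k → Finset ℤ) : CV k X → CV k X → Prop
  | CV.v j, CV.u i _ => (j : ℕ) = (i : ℕ)
  | CV.u i _, CV.v j => (j : ℕ) = (i : ℕ) + 1
  | _, _ => False

/-- Edge weights of the choice-gadget graph: `v_{i-1} → u_{i,x}` has weight `x`
and `u_{i,x} → v_i` has weight `(W - x)/β`. -/
noncomputable def Cw (k : ℕ) (X : Fin k → Finset ℤ) (W : ℤ) (β : ℝ) :
    CV k X → CV k X → ℝ
  | CV.v _, CV.u _ x => ((x : ℤ) : ℝ)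
  | CV.u _ x, CV.v _ => ((W : ℝ) - ((x : ℤ) : ℝ)) / β
  | _, _ => 0

/-!
Write `φ a` for the cost of the greedy path from `a` that always takes the largest element of the
current `X_i`. Passing gadget `i` through `x` costs `x + (W - x)/β`, which is antitone in `x` since
`β ≤ 1`, so `φ` is a potential: `φ a ≤ w(a,b) + φ b` on every edge, and every path from `a` to the
target costs at least `φ a`. Hence the perceived cost of a path starting with the edge `a → b` is at
least `w(a,b) + β φ b`, with equality for the greedy continuation. From `v_{i-1}` this bound equals
`x + β ((W - x)/β + φ v_i) = W + β φ v_i` for every choice `x`, and from `u_{i,x}` there is only one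
edge, so every edge attains the minimum.
-/

lemma pathCost_cons_cons (w : V → V → ℝ) (a b : V) (l : List V) :
    pathCost w (a :: b :: l) = w a b + pathCost w (b :: l) := by
  simp [pathCost]

lemma perceived_cons_cons (w : V → V → ℝ) (β : ℝ) (a b : V) (l : List V) :
    perceived w β (a :: b :: l) = w a b + β * pathCost w (b :: l) := by
  simp [perceived, pathCost]

section Potential

variable {E : V → V → Prop} {w : V → V → ℝ} {β : ℝ} {t : V}

lemma nodup_of_chain_of_rank_lt (rank : V → ℕ) (hrank : ∀ a b, E a b → rank a < rank b)
    {l : List V} (hl : l.IsChain E) : l.Nodup :=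
  ((hl.imp fun _ _ h => hrank _ _ h).pairwise (R := fun a b => rank a < rank b)).imp
    fun h heq => h.ne (congrArg rank heq)

lemma potential_le_pathCost {φ : V → ℝ} (hφt : φ t = 0) (hφ : ∀ a b, E a b → φ a ≤ w a b + φ b) :
    ∀ (a : V) (l : List V), (a :: l).IsChain E → (a :: l).getLast? = some t →
      φ a ≤ pathCost w (a :: l)
  | a, [], _, hlast => by
    obtain rfl : a = t := by simpa using hlast
    simp [hφt, pathCost]
  | a, b :: l, hchain, hlast => by
    rw [List.isChain_cons_cons] at hchain
    rw [List.getLast?_cons_cons] at hlast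
    have hb := potential_le_pathCost hφt hφ b l hchain.2 hlast
    rw [pathCost_cons_cons]
    linarith [hφ a b hchain.1]

lemma feasibleStep_of_potential (hβ : 0 ≤ β) {φ : V → ℝ} (hφt : φ t = 0)
    (hφ : ∀ a b, E a b → φ a ≤ w a b + φ b) {a b : V} {q : List V} (hab : E a b)
    (hpath : IsPathOn E a t (a :: b :: q)) (hq : pathCost w (b :: q) = φ b)
    (hmin : ∀ b', E a b' → w a b + β * φ b ≤ w a b' + β * φ b') :
    FeasibleStep E w β t a b := by
  refine ⟨hab, q, hpath, ?_⟩
  rintro r ⟨hhead, hlast, hchain, -⟩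
  obtain ⟨_ | ⟨b', r⟩, rfl⟩ : ∃ r', r = a :: r' := by
    cases r with
    | nil => simp at hhead
    | cons c r' => exact ⟨r', by simpa using hhead⟩
  · have hta : a = t := by simpa using hlast
    have hnot : a ∉ b :: q := (List.nodup_cons.1 hpath.2.2.2).1
    have hmem : t ∈ b :: q := List.mem_of_getLast? (by simpa using hpath.2.1)
    exact (hnot (hta ▸ hmem)).elim
  · rw [List.Chain', List.isChain_cons_cons] at hchain
    rw [List.getLast?_cons_cons] at hlast
    have hr := potential_le_pathCost hφt hφ b' r hchain.2 hlast
    rw [perceived_cons_cons, perceived_cons_cons, hq]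
    nlinarith [hmin b' hchain.1]

end Potential

lemma add_sub_div_antitone {β : ℝ} (hβ0 : 0 < β) (hβ1 : β ≤ 1) (W : ℝ) :
    Antitone fun x : ℝ => x + (W - x) / β := by
  intro x y hxy
  have h := le_div_self (sub_nonneg.2 hxy) hβ0 hβ1
  simp only [sub_div] at h ⊢
  linarith

namespace ChoiceGadget

variable {k : ℕ} {X : Fin k → Finset ℤ}

def maxChoice (hX : ∀ i, (X i).Nonempty) (i : Fin k) : {z : ℤ // z ∈ X i} :=
  ⟨(X i).max' (hX i), (X i).max'_mem (hX i)⟩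

def greedyTail (hX : ∀ i, (X i).Nonempty) : Fin (k + 1) → List (CV k X) :=
  Fin.reverseInduction [] fun i l => CV.u i (maxChoice hX i) :: CV.v i.succ :: l

@[simp]
lemma greedyTail_last (hX : ∀ i, (X i).Nonempty) : greedyTail hX (Fin.last k) = [] :=
  Fin.reverseInduction_last

@[simp]
lemma greedyTail_castSucc (hX : ∀ i, (X i).Nonempty) (i : Fin k) :
    greedyTail hX i.castSucc = CV.u i (maxChoice hX i) :: CV.v i.succ :: greedyTail hX i.succ :=
  Fin.reverseInduction_castSucc i

def greedyPath (hX : ∀ i, (X i).Nonempty) : CV k X → List (CV k X)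
  | CV.v j => CV.v j :: greedyTail hX j
  | CV.u i x => CV.u i x :: CV.v i.succ :: greedyTail hX i.succ

def rank : CV k X → ℕ
  | CV.v j => 2 * j
  | CV.u i _ => 2 * i + 1

lemma rank_lt_of_CE {a b : CV k X} (h : CE k X a b) : rank a < rank b := by
  cases a <;> cases b <;> simp only [CE, rank] at h ⊢ <;> omega

lemma eq_castSucc_of_CE {j : Fin (k + 1)} {i : Fin k} {x : {z : ℤ // z ∈ X i}}
    (h : CE k X (CV.v j) (CV.u i x)) : j = i.castSucc :=
  Fin.ext h

lemma eq_succ_of_CE {i : Fin k} {x : {z : ℤ // z ∈ X i}} {j : Fin (k + 1)}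
    (h : CE k X (CV.u i x) (CV.v j)) : j = i.succ :=
  Fin.ext h

lemma IsPathOn.cons_of_CE {a b t : CV k X} {q : List (CV k X)} (h : CE k X a b)
    (hp : IsPathOn (CE k X) b t (b :: q)) : IsPathOn (CE k X) a t (a :: b :: q) := by
  have hchain : (a :: b :: q).IsChain (CE k X) := List.isChain_cons_cons.2 ⟨h, hp.2.2.1⟩
  exact ⟨rfl, by rw [List.getLast?_cons_cons]; exact hp.2.1, hchain,
    nodup_of_chain_of_rank_lt rank (fun _ _ => rank_lt_of_CE) hchain⟩

lemma chain_greedyTail (hX : ∀ i, (X i).Nonempty) (j : Fin (k + 1)) :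
    (CV.v j :: greedyTail hX j).IsChain (CE k X) ∧
      (CV.v j :: greedyTail hX j).getLast? = some (CV.v (Fin.last k)) := by
  induction j using Fin.reverseInduction with
  | last => simp
  | cast i ih =>
    rw [greedyTail_castSucc, List.isChain_cons_cons, List.isChain_cons_cons,
      List.getLast?_cons_cons, List.getLast?_cons_cons]
    exact ⟨⟨rfl, rfl, ih.1⟩, ih.2⟩

lemma isPathOn_greedyPath (hX : ∀ i, (X i).Nonempty) (a : CV k X) :
    IsPathOn (CE k X) a (CV.v (Fin.last k)) (greedyPath hX a) := by
  have hpath : (greedyPath hX a).IsChain (CE k X) ∧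
      (greedyPath hX a).getLast? = some (CV.v (Fin.last k)) := by
    cases a with
    | v j => exact chain_greedyTail hX j
    | u i x =>
      rw [greedyPath, List.isChain_cons_cons, List.getLast?_cons_cons]
      exact ⟨⟨rfl, (chain_greedyTail hX i.succ).1⟩, (chain_greedyTail hX i.succ).2⟩
  refine ⟨by cases a <;> rfl, hpath.2, hpath.1, ?_⟩
  exact nodup_of_chain_of_rank_lt rank (fun _ _ => rank_lt_of_CE) hpath.1

section Greedy

variable (hX : ∀ i, (X i).Nonempty) (W : ℤ) (β : ℝ)

noncomputable def greedyCost (a : CV k X) : ℝ :=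
  pathCost (Cw k X W β) (greedyPath hX a)

lemma greedyCost_u (i : Fin k) (x : {z : ℤ // z ∈ X i}) :
    greedyCost hX W β (CV.u i x) = (W - x) / β + greedyCost hX W β (CV.v i.succ) :=
  pathCost_cons_cons _ _ _ _

lemma greedyCost_v_castSucc (i : Fin k) :
    greedyCost hX W β (CV.v i.castSucc) =
      (maxChoice hX i : ℤ) + greedyCost hX W β (CV.u i (maxChoice hX i)) := by
  rw [greedyCost, greedyPath, greedyTail_castSucc, pathCost_cons_cons]
  rfl

variable {hX W β}

lemma greedyCost_le (hβ0 : 0 < β) (hβ1 : β ≤ 1) {a b : CV k X} (h : CE k X a b) :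
    greedyCost hX W β a ≤ Cw k X W β a b + greedyCost hX W β b := by
  cases a with
  | v j =>
    cases b with
    | v _ => exact h.elim
    | u i x =>
      obtain rfl := eq_castSucc_of_CE h
      have hx : (x : ℝ) ≤ (maxChoice hX i : ℤ) := by exact_mod_cast (X i).le_max' x x.2
      have := add_sub_div_antitone hβ0 hβ1 W hx
      rw [greedyCost_v_castSucc, greedyCost_u, greedyCost_u]
      simp only [Cw]
      linarith
  | u i x =>
    cases b with
    | u _ _ => exact h.elim
    | v j =>
      obtain rfl := eq_succ_of_CE h
      exact (greedyCost_u hX W β i x).le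

lemma Cw_add_mul_greedyCost_u (hβ0 : 0 < β) (i : Fin k) (x : {z : ℤ // z ∈ X i})
    (j : Fin (k + 1)) :
    Cw k X W β (CV.v j) (CV.u i x) + β * greedyCost hX W β (CV.u i x) =
      W + β * greedyCost hX W β (CV.v i.succ) := by
  rw [greedyCost_u]
  simp only [Cw]
  field_simp
  ring

end Greedy

theorem feasibleStep_of_CE (hX : ∀ i, (X i).Nonempty) {W : ℤ} {β : ℝ} (hβ0 : 0 < β)
    (hβ1 : β ≤ 1) {a b : CV k X} (h : CE k X a b) :
    FeasibleStep (CE k X) (Cw k X W β) β (CV.v (Fin.last k)) a b := by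
  have hpath := isPathOn_greedyPath hX b
  obtain ⟨q, hq⟩ : ∃ q, greedyPath hX b = b :: q := by cases b <;> exact ⟨_, rfl⟩
  rw [hq] at hpath
  refine feasibleStep_of_potential hβ0.le (φ := greedyCost hX W β)
    (by simp [greedyCost, greedyPath, pathCost]) (fun _ _ => greedyCost_le hβ0 hβ1) h
    (IsPathOn.cons_of_CE h hpath) (by rw [greedyCost, hq]) fun b' h' => ?_
  cases a with
  | v j =>
    cases b with
    | v _ => exact h.elim
    | u i x =>
      cases b' with
      | v _ => exact h'.elim
      | u i' x' =>
        obtain rfl := eq_castSucc_of_CE h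
        obtain rfl := Fin.castSucc_injective _ (eq_castSucc_of_CE h')
        rw [Cw_add_mul_greedyCost_u hβ0, Cw_add_mul_greedyCost_u hβ0]
  | u i x =>
    cases b with
    | u _ _ => exact h.elim
    | v j =>
      cases b' with
      | u _ _ => exact h'.elim
      | v j' => rw [eq_succ_of_CE h, eq_succ_of_CE h']

end ChoiceGadget

theorem stmt12_general (k : ℕ) (X : Fin k → Finset ℤ) (hX : ∀ i, (X i).Nonempty)
    (W : ℤ) (β : ℝ) (hβ0 : 0 < β) (hβ1 : β < 1) :
    (∀ a b, CE k X a b → FeasibleStep (CE k X) (Cw k X W β) β (CV.v (Fin.last k)) a b) ∧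
    (∀ p, IsPathOn (CE k X) (CV.v 0) (CV.v (Fin.last k)) p →
        FeasPath (CE k X) (Cw k X W β) β (CV.v 0) (CV.v (Fin.last k)) p) := by
  have hfeas : ∀ a b, CE k X a b →
      FeasibleStep (CE k X) (Cw k X W β) β (CV.v (Fin.last k)) a b :=
    fun _ _ => ChoiceGadget.feasibleStep_of_CE hX hβ0 hβ1.le
  exact ⟨hfeas, fun p hp => ⟨hp, hp.2.2.1.imp fun _ _ => hfeas _ _⟩⟩

/-- In the choice-gadget graph built from nonempty finite
sets of integers `X₁,…,X_k`, an integer `W` greater than every element of every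
`X_i`, and `0 < β < 1`, every edge is a feasible transition; consequently every
directed `s`–`t` path is feasible. -/
theorem stmt12 (k : ℕ) (X : Fin k → Finset ℤ) (hX : ∀ i, (X i).Nonempty)
    (W : ℤ) (hW : ∀ i, ∀ x ∈ X i, x < W) (β : ℝ) (hβ0 : 0 < β) (hβ1 : β < 1) :
    (∀ a b, CE k X a b → FeasibleStep (CE k X) (Cw k X W β) β (CV.v (Fin.last k)) a b) ∧
    (∀ p, IsPathOn (CE k X) (CV.v 0) (CV.v (Fin.last k)) p →
        FeasPath (CE k X) (Cw k X W β) β (CV.v 0) (CV.v (Fin.last k)) p) :=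
  stmt12_general k X hX W β hβ0 hβ1
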